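/- arXiv:1402.3904 — 4 statements merged into one kernel-verified Lean document; each statement's English description precedes it below -/
import Mathlib

section
/- Let λ, A, B ∈ ℂ with |λ| > 1 and A, B ≠ 0, and for n ∈ ℕ set yₙ = Aλⁿ + Bλ⁻ⁿ. Assume yₙ ≠ 0 for all n ≥ 0 (in particular A + B = y₀ ≠ 0). Then the series ∑_{n=0}^{∞} 1/(yₙ y_{n+1}) converges and its sum equals 1/(A(A+B)(λ − λ⁻¹)). -/
open Filter Topology

/-! With `tₙ = λⁿ / yₙ`, the cross term of `λⁿ⁺¹ yₙ - λⁿ yₙ₊₁` cancels and leaves the constant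
`B (λ - λ⁻¹)`, so `B (λ - λ⁻¹) / (yₙ yₙ₊₁) = tₙ₊₁ - tₙ` and the series telescopes. Since
`yₙ / λⁿ = A + B λ⁻²ⁿ → A`, the partial sums tend to `(1/A - 1/(A + B)) / (B (λ - λ⁻¹))`. -/

section Field

variable {K : Type*} [Field K]

theorem pow_succ_mul_sub_pow_mul_succ (lam A B : K) (hlam : lam ≠ 0) (n : ℕ) :
    lam ^ (n + 1) * (A * lam ^ n + B * lam⁻¹ ^ n) -
      lam ^ n * (A * lam ^ (n + 1) + B * lam⁻¹ ^ (n + 1)) = B * (lam - lam⁻¹) := by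
  have hp : lam ^ n * lam⁻¹ ^ n = 1 := by rw [← mul_pow, mul_inv_cancel₀ hlam, one_pow]
  linear_combination B * (lam - lam⁻¹) * hp

theorem mul_sum_range_one_div_mul_succ (lam A B : K) (hlam : lam ≠ 0) (y : ℕ → K)
    (hy : ∀ n : ℕ, y n = A * lam ^ n + B * lam⁻¹ ^ n) (hy0 : ∀ n : ℕ, y n ≠ 0) (N : ℕ) :
    B * (lam - lam⁻¹) * ∑ n ∈ Finset.range N, 1 / (y n * y (n + 1)) =
      lam ^ N / y N - 1 / y 0 := by
  have hterm : ∀ n : ℕ, B * (lam - lam⁻¹) * (1 / (y n * y (n + 1))) =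
      lam ^ (n + 1) / y (n + 1) - lam ^ n / y n := fun n => by
    have key := pow_succ_mul_sub_pow_mul_succ lam A B hlam n
    rw [← hy n, ← hy (n + 1)] at key
    rw [div_sub_div _ _ (hy0 (n + 1)) (hy0 n), mul_comm (y (n + 1)) (lam ^ n), key,
      mul_comm (y (n + 1)), mul_one_div]
  rw [Finset.mul_sum, Finset.sum_congr rfl fun n _ => hterm n,
    Finset.sum_range_sub (fun n => lam ^ n / y n), pow_zero]

end Field

theorem sub_inv_ne_zero_of_one_lt_norm {𝕜 : Type*} [NormedField 𝕜] {lam : 𝕜}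
    (hlam : 1 < ‖lam‖) : lam - lam⁻¹ ≠ 0 := fun h => by
  have := congrArg norm (sub_eq_zero.mp h)
  rw [norm_inv] at this
  nlinarith [inv_lt_one_of_one_lt₀ hlam]

theorem tendsto_pow_div_of_one_lt_norm {𝕜 : Type*} [NormedField 𝕜] (lam A B : 𝕜)
    (hlam : 1 < ‖lam‖) (hA : A ≠ 0) (y : ℕ → 𝕜)
    (hy : ∀ n : ℕ, y n = A * lam ^ n + B * lam⁻¹ ^ n) :
    Tendsto (fun n : ℕ => lam ^ n / y n) atTop (𝓝 A⁻¹) := by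
  have hlam0 : lam ≠ 0 := norm_pos_iff.mp (one_pos.trans hlam)
  have hw : ‖lam⁻¹ ^ 2‖ < 1 := by
    rw [norm_pow, norm_inv]
    exact pow_lt_one₀ (by positivity) (inv_lt_one_of_one_lt₀ hlam) two_ne_zero
  have hdiv : ∀ n : ℕ, y n / lam ^ n = A + B * (lam⁻¹ ^ 2) ^ n := fun n => by
    rw [hy n, ← pow_mul, mul_comm 2, pow_mul, inv_pow, inv_pow]
    field_simp
  have hlim : Tendsto (fun n : ℕ => y n / lam ^ n) atTop (𝓝 A) := by
    simpa [hdiv] using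
      tendsto_const_nhds.add ((tendsto_pow_atTop_nhds_zero_of_norm_lt_one hw).const_mul B)
  simpa only [inv_div] using hlim.inv₀ hA

/-- For `λ, A, B ∈ ℂ` with `|λ| > 1`, `A, B ≠ 0`, and
`yₙ = Aλⁿ + Bλ⁻ⁿ` for `n ∈ ℕ` all nonzero, the series `∑ 1/(yₙ y_{n+1})`
converges with sum `1/(A(A+B)(λ − λ⁻¹))`. -/
theorem sum_one_div_y_mul_y_succ_nat (lam A B : ℂ) (hlam : 1 < ‖lam‖)
    (hA : A ≠ 0) (hB : B ≠ 0) (y : ℕ → ℂ)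
    (hy : ∀ n : ℕ, y n = A * lam ^ n + B * lam⁻¹ ^ n)
    (hy0 : ∀ n : ℕ, y n ≠ 0) :
    Tendsto (fun N : ℕ => ∑ n ∈ Finset.range N, 1 / (y n * y (n + 1))) atTop
      (nhds (1 / (A * (A + B) * (lam - lam⁻¹)))) := by
  have hlam0 : lam ≠ 0 := norm_pos_iff.mp (one_pos.trans hlam)
  have hd : lam - lam⁻¹ ≠ 0 := sub_inv_ne_zero_of_one_lt_norm hlam
  have hAB : A + B ≠ 0 := by simpa [hy 0] using hy0 0
  have hc : B * (lam - lam⁻¹) ≠ 0 := mul_ne_zero hB hd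
  have hsum : ∀ N : ℕ, ∑ n ∈ Finset.range N, 1 / (y n * y (n + 1)) =
      (lam ^ N / y N - 1 / y 0) / (B * (lam - lam⁻¹)) := fun N => by
    rw [← mul_sum_range_one_div_mul_succ lam A B hlam0 y hy hy0 N, mul_div_cancel_left₀ _ hc]
  have hval : (A⁻¹ - 1 / y 0) / (B * (lam - lam⁻¹)) = 1 / (A * (A + B) * (lam - lam⁻¹)) := by
    rw [hy 0]
    field_simp
    ring
  simpa only [hsum, hval] using
    ((tendsto_pow_div_of_one_lt_norm lam A B hlam hA y hy).sub_const (1 / y 0)).div_const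
      (B * (lam - lam⁻¹))
end

section
/- Let λ, A, B ∈ ℂ with |λ| > 1 and A, B ≠ 0, and for n ∈ ℤ set yₙ = Aλⁿ + Bλ⁻ⁿ. Assume yₙ ≠ 0 for all n ∈ ℤ. Then the family (1/(yₙ y_{n+1}))_{n ∈ ℤ} is summable and ∑_{n ∈ ℤ} 1/(yₙ y_{n+1}) = 1/(AB(λ − λ⁻¹)). -/
/-!
Put `uₙ = λ⁻ⁿ / yₙ = 1 / (Aλ²ⁿ + B)`. Since `y_{n+1} - λ⁻¹ yₙ = Aλⁿ (λ - λ⁻¹)`, the series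
telescopes: `1 / (yₙ y_{n+1}) = (uₙ - u_{n+1}) / (A (λ - λ⁻¹))`. As `n → ∞` we have `uₙ → 0` and
`u₋ₙ → 1 / B`, both at the geometric rate `|λ|⁻²ⁿ`, which makes the differences absolutely
summable; the sum is `(1/B - 0) / (A (λ - λ⁻¹))`.
-/

open Filter Finset Topology Asymptotics

section Telescoping

variable {E : Type*} [NormedAddCommGroup E] [CompleteSpace E] {r : ℝ}

theorem hasSum_sub_succ_of_isBigO_pow {g : ℕ → E} {l : E} (hr₀ : 0 ≤ r) (hr₁ : r < 1)
    (hg : (fun n => g n - l) =O[atTop] (r ^ ·)) :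
    HasSum (fun n => g n - g (n + 1)) (g 0 - l) := by
  have hsucc : (fun n => g (n + 1) - l) =O[atTop] (r ^ ·) := by
    refine (hg.comp_tendsto (tendsto_add_atTop_nat 1)).trans ?_
    simpa only [Function.comp_def, pow_succ'] using (isBigO_refl (r ^ ·) atTop).const_mul_left r
  have hsum : Summable (fun n => g n - g (n + 1)) :=
    summable_of_isBigO_nat (summable_geometric_of_lt_one hr₀ hr₁) <| by
      simpa only [sub_sub_sub_cancel_right] using hg.sub hsucc
  have hlim : Tendsto g atTop (𝓝 l) := tendsto_sub_nhds_zero_iff.mp <|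
    hg.trans_tendsto (tendsto_pow_atTop_nhds_zero_of_lt_one hr₀ hr₁)
  rw [hsum.hasSum_iff_tendsto_nat]
  simpa only [sum_range_sub'] using tendsto_const_nhds.sub hlim

theorem hasSum_int_sub_succ_of_isBigO_pow {g : ℤ → E} {a b : E} (hr₀ : 0 ≤ r) (hr₁ : r < 1)
    (hpos : (fun n : ℕ => g n - a) =O[atTop] (r ^ ·))
    (hneg : (fun n : ℕ => g (-n) - b) =O[atTop] (r ^ ·)) :
    HasSum (fun n => g n - g (n + 1)) (b - a) := by
  have h₁ := hasSum_sub_succ_of_isBigO_pow hr₀ hr₁ hpos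
  have h₂ := (hasSum_sub_succ_of_isBigO_pow hr₀ hr₁ hneg).neg
  push_cast at h₁ h₂
  have h₂' : HasSum (fun n : ℕ => g (-(n + 1)) - g (-(n + 1) + 1)) (b - g 0) := by
    convert h₂ using 1
    · ext n
      rw [show -((n : ℤ) + 1) + 1 = -n by ring, neg_sub]
    · rw [neg_zero, neg_sub]
  convert h₁.of_nat_of_neg_add_one (f := fun n : ℤ => g n - g (n + 1)) h₂' using 1
  abel

end Telescoping

theorem isBigO_comp_pow_sub {𝕜 E : Type*} [NontriviallyNormedField 𝕜] [NormedAddCommGroup E]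
    [NormedSpace 𝕜 E] {φ : 𝕜 → E} {w : 𝕜} (hφ : DifferentiableAt 𝕜 φ 0) (hw : ‖w‖ < 1) :
    (fun n : ℕ => φ (w ^ n) - φ 0) =O[atTop] (‖w‖ ^ ·) := by
  have := hφ.isBigO_sub.comp_tendsto (tendsto_pow_atTop_nhds_zero_of_norm_lt_one hw)
  simpa [Function.comp_def, isBigO_norm_right] using this.norm_right

section

variable {lam A B : ℂ} {y : ℤ → ℂ}

theorem y_succ_sub_inv_mul_y (hlam : lam ≠ 0) (hy : ∀ n : ℤ, y n = A * lam ^ n + B * lam⁻¹ ^ n)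
    (n : ℤ) : y (n + 1) - lam⁻¹ * y n = A * lam ^ n * (lam - lam⁻¹) := by
  rw [hy, hy, zpow_add_one₀ hlam, zpow_add_one₀ (inv_ne_zero hlam)]
  ring

theorem one_div_y_mul_y_succ_eq (hlam : lam ≠ 0) (hA : A ≠ 0) (hd : lam - lam⁻¹ ≠ 0)
    (hy : ∀ n : ℤ, y n = A * lam ^ n + B * lam⁻¹ ^ n) (hy0 : ∀ n : ℤ, y n ≠ 0) (n : ℤ) :
    1 / (y n * y (n + 1)) =
      (A * (lam - lam⁻¹))⁻¹ * (lam⁻¹ ^ n / y n - lam⁻¹ ^ (n + 1) / y (n + 1)) := by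
  have hstep := y_succ_sub_inv_mul_y hlam hy n
  have hn := hy0 n
  have hn1 := hy0 (n + 1)
  rw [zpow_add_one₀ (inv_ne_zero hlam), inv_zpow]
  have hd' : lam ^ 2 - 1 ≠ 0 := by
    contrapose! hd
    field_simp
    linear_combination hd
  field_simp at hstep ⊢
  linear_combination -hstep

theorem inv_zpow_div_y_natCast (hlam : lam ≠ 0) (hy : ∀ n : ℤ, y n = A * lam ^ n + B * lam⁻¹ ^ n)
    (n : ℕ) : lam⁻¹ ^ (n : ℤ) / y n = (lam⁻¹ ^ 2) ^ n / (A + B * (lam⁻¹ ^ 2) ^ n) := by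
  simp only [hy, zpow_natCast, inv_pow]
  conv_rhs => rw [← mul_div_mul_left _ _ (pow_ne_zero n hlam)]
  congr 1 <;> field_simp <;> ring

theorem inv_zpow_div_y_neg_natCast (hlam : lam ≠ 0)
    (hy : ∀ n : ℤ, y n = A * lam ^ n + B * lam⁻¹ ^ n) (n : ℕ) : lam⁻¹ ^ (-n : ℤ) / y (-n) = 1 / (A * (lam⁻¹ ^ 2) ^ n + B) := by
  simp only [hy, zpow_neg, zpow_natCast, inv_pow, inv_inv]
  conv_rhs => rw [← mul_div_mul_left _ _ (pow_ne_zero n hlam)]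
  congr 1
  · field_simp
  · field_simp
    ring

end

/-- For `λ, A, B ∈ ℂ` with `|λ| > 1`, `A, B ≠ 0`, and
`yₙ = Aλⁿ + Bλ⁻ⁿ` for `n ∈ ℤ` all nonzero, the family `(1/(yₙ y_{n+1}))_{n ∈ ℤ}`
is (unconditionally) summable with sum `1/(AB(λ − λ⁻¹))`. -/
theorem hasSum_one_div_y_mul_y_succ_int (lam A B : ℂ) (hlam : 1 < ‖lam‖)
    (hA : A ≠ 0) (hB : B ≠ 0) (y : ℤ → ℂ)
    (hy : ∀ n : ℤ, y n = A * lam ^ n + B * lam⁻¹ ^ n)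
    (hy0 : ∀ n : ℤ, y n ≠ 0) :
    HasSum (fun n : ℤ => 1 / (y n * y (n + 1))) (1 / (A * B * (lam - lam⁻¹))) := by
  have hlam0 : lam ≠ 0 := norm_pos_iff.mp (one_pos.trans hlam)
  have hinv : ‖lam⁻¹‖ < 1 := by rw [norm_inv]; exact inv_lt_one_of_one_lt₀ hlam
  have hd : lam - lam⁻¹ ≠ 0 := sub_ne_zero.mpr (ne_of_apply_ne norm (by linarith))
  have hw : ‖lam⁻¹ ^ 2‖ < 1 := by
    rw [norm_pow]; exact pow_lt_one₀ (norm_nonneg _) hinv two_ne_zero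
  have hpos : (fun n : ℕ => lam⁻¹ ^ (n : ℤ) / y n - 0) =O[atTop] (‖lam⁻¹ ^ 2‖ ^ ·) := by
    refine (isBigO_comp_pow_sub (φ := fun x => x / (A + B * x))
      (by fun_prop (disch := simpa)) hw).congr_left fun n => ?_
    rw [inv_zpow_div_y_natCast hlam0 hy]
    simp
  have hneg : (fun n : ℕ => lam⁻¹ ^ (-n : ℤ) / y (-n) - 1 / B) =O[atTop] (‖lam⁻¹ ^ 2‖ ^ ·) := by
    refine (isBigO_comp_pow_sub (φ := fun x => 1 / (A * x + B))
      (by fun_prop (disch := simpa)) hw).congr_left fun n => ?_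
    rw [inv_zpow_div_y_neg_natCast hlam0 hy]
    simp
  have hvalue : 1 / (A * B * (lam - lam⁻¹)) = (A * (lam - lam⁻¹))⁻¹ * (1 / B - 0) := by
    rw [sub_zero]
    field_simp
  rw [hvalue]
  exact ((hasSum_int_sub_succ_of_isBigO_pow (g := fun n => lam⁻¹ ^ n / y n) (norm_nonneg _) hw
    hpos hneg).mul_left _).congr_fun (one_div_y_mul_y_succ_eq hlam0 hA hd hy hy0)
end

section
/- Let μ ∈ ℂ and let x, y, z ∈ ℂ satisfy the μ-Markoff equation x² + y² + z² − xyz = μ, with xyz ≠ 0 and x² ≠ μ, y² ≠ μ, z² ≠ μ. Then Ψ_μ(y,z;x) + Ψ_μ(z,x;y) + Ψ_μ(x,y;z) = 1. -/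
set_option maxHeartbeats 4000000

/-- The edge value `Ψ_μ(x,y;z) = z/(xy) − (1/3)(1/2 − z/(xy))(μ/(x²−μ) + μ/(y²−μ))`. -/
noncomputable def Psi (μ x y z : ℂ) : ℂ :=
  z / (x * y) - (1 / 3) * (1 / 2 - z / (x * y)) * (μ / (x ^ 2 - μ) + μ / (y ^ 2 - μ))

lemma Psi_aux (μ x y z a b : ℂ) (hx0 : x ≠ 0) (hy0 : y ≠ 0) (ha : a ≠ 0) (hb : b ≠ 0) :
    z / (x * y) - (1 / 3) * (1 / 2 - z / (x * y)) * (μ / a + μ / b)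
      = (6 * z * a * b - (x * y - 2 * z) * μ * (a + b)) / (6 * (x * y) * (a * b)) := by
  have hxy : x * y ≠ 0 := mul_ne_zero hx0 hy0
  have hab : a * b ≠ 0 := mul_ne_zero ha hb
  have hD : (6 : ℂ) * (x * y) * (a * b) ≠ 0 :=
    mul_ne_zero (mul_ne_zero (by norm_num) hxy) hab
  have e1 : (1:ℂ) / 2 - z / (x * y) = (x * y - 2 * z) / (2 * (x * y)) := by
    rw [div_sub_div _ _ two_ne_zero hxy]; ring_nf
  have e2 : (1:ℂ)/3 * ((x*y-2*z)/(2*(x*y))) * ((μ / a + μ / b)) =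
      ((x*y-2*z)*(μ*b+a*μ)) / (6*(x*y)*(a*b)) := by
    rw [div_add_div _ _ ha hb, div_mul_div_comm, div_mul_div_comm]
    rw [div_eq_div_iff (by simp [hxy, hab]) hD]
    ring
  rw [e1, e2, eq_div_iff hD, sub_mul, div_mul_cancel₀ _ hD,
    show (6:ℂ)*(x*y)*(a*b) = x*y*(6*(a*b)) from by ring, ← mul_assoc,
    div_mul_cancel₀ _ hxy]
  ring

lemma Psi_eq (μ x y z : ℂ) (hx0 : x ≠ 0) (hy0 : y ≠ 0)
    (hx' : x ^ 2 - μ ≠ 0) (hy' : y ^ 2 - μ ≠ 0) :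
    Psi μ x y z = (6 * z * (x ^ 2 - μ) * (y ^ 2 - μ)
        - (x * y - 2 * z) * μ * ((x ^ 2 - μ) + (y ^ 2 - μ)))
      / (6 * (x * y) * ((x ^ 2 - μ) * (y ^ 2 - μ))) :=
  Psi_aux μ x y z _ _ hx0 hy0 hx' hy'

/-- if `(x,y,z)` satisfies the μ-Markoff equation with `xyz ≠ 0` and
`x², y², z² ≠ μ`, then `Ψ_μ(y,z;x) + Ψ_μ(z,x;y) + Ψ_μ(x,y;z) = 1`. -/
theorem Psi_vertex_sum_eq_one (μ x y z : ℂ)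
    (hmarkoff : x ^ 2 + y ^ 2 + z ^ 2 - x * y * z = μ)
    (hxyz : x * y * z ≠ 0) (hx : x ^ 2 ≠ μ) (hy : y ^ 2 ≠ μ) (hz : z ^ 2 ≠ μ) :
    Psi μ y z x + Psi μ z x y + Psi μ x y z = 1 := by
  have hx0 : x ≠ 0 := fun h => hxyz (by simp [h])
  have hy0 : y ≠ 0 := fun h => hxyz (by simp [h])
  have hz0 : z ≠ 0 := fun h => hxyz (by simp [h])
  have hx' : x ^ 2 - μ ≠ 0 := sub_ne_zero.mpr hx
  have hy' : y ^ 2 - μ ≠ 0 := sub_ne_zero.mpr hy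
  have hz' : z ^ 2 - μ ≠ 0 := sub_ne_zero.mpr hz
  rw [Psi_eq μ y z x hy0 hz0 hy' hz', Psi_eq μ z x y hz0 hx0 hz' hx',
      Psi_eq μ x y z hx0 hy0 hx' hy']
  have d1 : (6 : ℂ) * (y * z) * ((y ^ 2 - μ) * (z ^ 2 - μ)) ≠ 0 :=
    mul_ne_zero (mul_ne_zero (by norm_num) (mul_ne_zero hy0 hz0)) (mul_ne_zero hy' hz')
  have d2 : (6 : ℂ) * (z * x) * ((z ^ 2 - μ) * (x ^ 2 - μ)) ≠ 0 :=
    mul_ne_zero (mul_ne_zero (by norm_num) (mul_ne_zero hz0 hx0)) (mul_ne_zero hz' hx')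
  have d3 : (6 : ℂ) * (x * y) * ((x ^ 2 - μ) * (y ^ 2 - μ)) ≠ 0 :=
    mul_ne_zero (mul_ne_zero (by norm_num) (mul_ne_zero hx0 hy0)) (mul_ne_zero hx' hy')
  rw [div_add_div _ _ d1 d2, div_add_div _ _ (mul_ne_zero d1 d2) d3,
      div_eq_one_iff_eq (mul_ne_zero (mul_ne_zero d1 d2) d3)]
  subst hmarkoff
  ring
end

section
/- Let A, B ∈ SL(2, ℂ). Then there exists a one-dimensional subspace of ℂ² invariant under both A and B (equivalently, A and B have a common eigenvector, i.e., the representation of the rank-two free group sending the generators to A and B is reducible) if and only if tr(ABA⁻¹B⁻¹) = 2. -/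
/-!
A nonzero `v ∈ ℂ²` spans an `M`-invariant line iff `det [v, M v] = 0`, and `det [v, M v]` is the
binary quadratic form in `v` with coefficients `(M₁₀, M₁₁ - M₀₀, -M₀₁)`. So `A` and `B` have a
common invariant line iff their two forms have a common nontrivial zero, which over an
algebraically closed field happens iff the resultant of the forms vanishes. For matrices of
determinant one, a direct computation gives `tr(ABA⁻¹B⁻¹) = 2 + resultant`.
-/

/-- The trace of an element of `SL(2, ℂ)`. -/
noncomputable def trSL (M : Matrix.SpecialLinearGroup (Fin 2) ℂ) : ℂ :=
  Matrix.trace (M : Matrix (Fin 2) (Fin 2) ℂ)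

open Matrix Module Submodule

section BinaryQuadratic

variable {R K : Type*} [CommRing R] [Field K]

def binaryQuadratic (a b c : R) (v : Fin 2 → R) : R :=
  a * v 0 ^ 2 + b * v 0 * v 1 + c * v 1 ^ 2

-- The Sylvester resultant of `a₁ x² + b₁ x y + c₁ y²` and `a₂ x² + b₂ x y + c₂ y²`.
def binaryResultant (a₁ b₁ c₁ a₂ b₂ c₂ : R) : R :=
  (a₁ * c₂ - a₂ * c₁) ^ 2 - (a₁ * b₂ - a₂ * b₁) * (b₁ * c₂ - b₂ * c₁)

theorem binaryResultant_eq_zero_of_binaryQuadratic_eq_zero [IsDomain R]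
    {a₁ b₁ c₁ a₂ b₂ c₂ : R} {v : Fin 2 → R} (hv : v ≠ 0)
    (h₁ : binaryQuadratic a₁ b₁ c₁ v = 0) (h₂ : binaryQuadratic a₂ b₂ c₂ v = 0) :
    binaryResultant a₁ b₁ c₁ a₂ b₂ c₂ = 0 := by
  unfold binaryQuadratic at h₁ h₂
  set p := a₁ * b₂ - a₂ * b₁
  set r := a₁ * c₂ - a₂ * c₁
  set s := b₁ * c₂ - b₂ * c₁
  have hx : binaryResultant a₁ b₁ c₁ a₂ b₂ c₂ * v 0 ^ 3 = 0 := by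
    unfold binaryResultant
    linear_combination (-(s * v 0 * b₂) + r * v 0 * c₂ - s * v 1 * c₂) * h₁
      + (s * v 0 * b₁ - r * v 0 * c₁ + s * v 1 * c₁) * h₂
  have hy : binaryResultant a₁ b₁ c₁ a₂ b₂ c₂ * v 1 ^ 3 = 0 := by
    unfold binaryResultant
    linear_combination (p * v 1 * b₂ - r * v 1 * a₂ + p * v 0 * a₂) * h₁
      + (-(p * v 1 * b₁) + r * v 1 * a₁ - p * v 0 * a₁) * h₂
  by_contra hres
  refine hv (funext fun i => ?_)
  fin_cases i
  · exact pow_eq_zero_iff three_ne_zero |>.mp ((mul_eq_zero.mp hx).resolve_left hres)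
  · exact pow_eq_zero_iff three_ne_zero |>.mp ((mul_eq_zero.mp hy).resolve_left hres)

theorem exists_ne_zero_binaryQuadratic_eq_zero [IsAlgClosed K] (a b c : K) :
    ∃ v ≠ 0, binaryQuadratic a b c v = 0 := by
  rcases eq_or_ne a 0 with rfl | ha
  · exact ⟨![1, 0], by simp, by simp [binaryQuadratic]⟩
  obtain ⟨t, ht⟩ := IsAlgClosed.exists_root (Polynomial.C a * .X ^ 2 + .C b * .X + .C c)
    (by simp [Polynomial.degree_quadratic ha])
  refine ⟨![t, 1], by simp, ?_⟩
  simpa [binaryQuadratic, mul_assoc] using ht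

theorem exists_common_zero_of_binaryResultant_eq_zero [IsAlgClosed K] {a₁ b₁ c₁ a₂ b₂ c₂ : K}
    (h : binaryResultant a₁ b₁ c₁ a₂ b₂ c₂ = 0) :
    ∃ v ≠ 0, binaryQuadratic a₁ b₁ c₁ v = 0 ∧ binaryQuadratic a₂ b₂ c₂ v = 0 := by
  set p := a₁ * b₂ - a₂ * b₁
  set r := a₁ * c₂ - a₂ * c₁
  set s := b₁ * c₂ - b₂ * c₁
  -- `!![p, r; r, s]` is the Bézout matrix of the two forms; its determinant is minus the resultant.
  obtain ⟨u, hu, hBu⟩ := (exists_mulVec_eq_zero_iff (M := !![p, r; r, s])).mpr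
    (by rw [det_fin_two_of, ← neg_eq_zero, ← h, binaryResultant]; ring)
  have hu₀ : p * u 0 + r * u 1 = 0 := by simpa [mulVec, dotProduct] using congrFun hBu 0
  have hu₁ : r * u 0 + s * u 1 = 0 := by simpa [mulVec, dotProduct] using congrFun hBu 1
  have proportional (w : Fin 2 → K) : binaryQuadratic a₁ b₁ c₁ w * binaryQuadratic a₂ b₂ c₂ u =
      binaryQuadratic a₁ b₁ c₁ u * binaryQuadratic a₂ b₂ c₂ w := by
    unfold binaryQuadratic
    linear_combination (w 0 ^ 2 * u 1 - w 0 * w 1 * u 0) * hu₀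
      + (w 0 * w 1 * u 1 - w 1 ^ 2 * u 0) * hu₁
  by_cases hu₀₁ : binaryQuadratic a₁ b₁ c₁ u = 0 ∧ binaryQuadratic a₂ b₂ c₂ u = 0
  · exact ⟨u, hu, hu₀₁⟩
  rcases not_and_or.mp hu₀₁ with h₁ | h₂
  · obtain ⟨w, hw, hw₁⟩ := exists_ne_zero_binaryQuadratic_eq_zero a₁ b₁ c₁
    have := proportional w
    rw [hw₁, zero_mul, eq_comm, mul_eq_zero] at this
    exact ⟨w, hw, hw₁, this.resolve_left h₁⟩
  · obtain ⟨w, hw, hw₂⟩ := exists_ne_zero_binaryQuadratic_eq_zero a₂ b₂ c₂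
    have := proportional w
    rw [hw₂, mul_zero, mul_eq_zero] at this
    exact ⟨w, hw, this.resolve_right h₂, hw₂⟩

theorem binaryResultant_eq_zero_iff [IsAlgClosed K] {a₁ b₁ c₁ a₂ b₂ c₂ : K} :
    binaryResultant a₁ b₁ c₁ a₂ b₂ c₂ = 0 ↔
      ∃ v ≠ 0, binaryQuadratic a₁ b₁ c₁ v = 0 ∧ binaryQuadratic a₂ b₂ c₂ v = 0 :=
  ⟨exists_common_zero_of_binaryResultant_eq_zero, fun ⟨_, hv, h₁, h₂⟩ =>
    binaryResultant_eq_zero_of_binaryQuadratic_eq_zero hv h₁ h₂⟩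

end BinaryQuadratic

theorem mem_span_singleton_iff_mul_sub_mul_eq_zero {K : Type*} [Field K] {v : Fin 2 → K}
    (hv : v ≠ 0) (w : Fin 2 → K) : w ∈ K ∙ v ↔ v 0 * w 1 - v 1 * w 0 = 0 := by
  rw [mem_span_singleton, ← not_iff_not, not_exists, ← LinearIndependent.pair_iff' hv]
  have := linearIndependent_rows_iff_isUnit (A := Matrix.of ![v, w])
  rw [isUnit_iff_isUnit_det, isUnit_iff_ne_zero, det_fin_two] at this
  simpa using this

theorem Matrix.mulVec_mem_span_singleton_iff {K : Type*} [Field K] (M : Matrix (Fin 2) (Fin 2) K)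
    {v : Fin 2 → K} (hv : v ≠ 0) :
    M *ᵥ v ∈ K ∙ v ↔ binaryQuadratic (M 1 0) (M 1 1 - M 0 0) (-M 0 1) v = 0 := by
  rw [mem_span_singleton_iff_mul_sub_mul_eq_zero hv]
  congr! 1
  simp only [binaryQuadratic, mulVec, dotProduct, Fin.sum_univ_two]
  ring

theorem Matrix.SpecialLinearGroup.trace_commutator {R : Type*} [CommRing R]
    (A B : SpecialLinearGroup (Fin 2) R) :
    trace ((A * B * A⁻¹ * B⁻¹ : SpecialLinearGroup (Fin 2) R) : Matrix (Fin 2) (Fin 2) R) =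
      2 + binaryResultant (A 1 0) (A 1 1 - A 0 0) (-A 0 1) (B 1 0) (B 1 1 - B 0 0) (-B 0 1) := by
  have hA := A.det_coe
  have hB := B.det_coe
  rw [det_fin_two] at hA hB
  simp only [SpecialLinearGroup.coe_mul, SpecialLinearGroup.coe_inv, adjugate_fin_two,
    trace_fin_two, mul_apply, Fin.sum_univ_two, of_apply, cons_val', cons_val_zero, cons_val_one,
    empty_val', cons_val_fin_one, binaryResultant]
  linear_combination (2 * (B 0 0 * B 1 1 - B 0 1 * B 1 0)) * hA + 2 * hB

theorem exists_invariant_line_iff {K E : Type*} [Field K] [AddCommGroup E] [Module K E]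
    (f g : E →ₗ[K] E) :
    (∃ V : Submodule K E, finrank K V = 1 ∧ (∀ v ∈ V, f v ∈ V) ∧ (∀ v ∈ V, g v ∈ V)) ↔
      ∃ v ≠ 0, f v ∈ K ∙ v ∧ g v ∈ K ∙ v := by
  have invariant_iff (h : E →ₗ[K] E) (v : E) : (∀ w ∈ K ∙ v, h w ∈ K ∙ v) ↔ h v ∈ K ∙ v :=
    span_singleton_le_iff_mem v ((K ∙ v).comap h)
  simp only [← isAtom_iff_finrank_eq_one, atom_iff_nonzero_span]
  constructor
  · rintro ⟨_, ⟨v, hv, rfl⟩, hf, hg⟩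
    exact ⟨v, hv, (invariant_iff f v).mp hf, (invariant_iff g v).mp hg⟩
  · rintro ⟨v, hv, hf, hg⟩
    exact ⟨K ∙ v, ⟨v, hv, rfl⟩, (invariant_iff f v).mpr hf, (invariant_iff g v).mpr hg⟩

/-- `A, B ∈ SL(2,ℂ)` have a common invariant line in `ℂ²`
(i.e. the representation they generate is reducible) if and only if
`tr(ABA⁻¹B⁻¹) = 2`. -/
theorem reducible_iff_commutator_trace_eq_two (A B : Matrix.SpecialLinearGroup (Fin 2) ℂ) :
    (∃ V : Submodule ℂ (Fin 2 → ℂ), Module.finrank ℂ V = 1 ∧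
      (∀ v ∈ V, (A : Matrix (Fin 2) (Fin 2) ℂ).mulVec v ∈ V) ∧
      (∀ v ∈ V, (B : Matrix (Fin 2) (Fin 2) ℂ).mulVec v ∈ V)) ↔
    trSL (A * B * A⁻¹ * B⁻¹) = 2 := by
  refine (exists_invariant_line_iff (A : Matrix (Fin 2) (Fin 2) ℂ).mulVecLin
    (B : Matrix (Fin 2) (Fin 2) ℂ).mulVecLin).trans ?_
  rw [trSL, SpecialLinearGroup.trace_commutator, add_eq_left, binaryResultant_eq_zero_iff]
  refine exists_congr fun v => and_congr_right fun hv => ?_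
  simp only [mulVecLin_apply, mulVec_mem_span_singleton_iff _ hv]
end
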